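/- arXiv:2203.13503 — 2 statements merged into one kernel-verified Lean document; each statement's English description precedes it below -/
import Mathlib

section
/- Mixture decomposition of the Kullback–Leibler divergence (key identity in the proof of Theorem 4): Let p be a probability measure on a measurable space Z, let Q₁,…,Q_K be probability measures on Z with Q_i ≪ p and KL(Q_i ‖ p) < ∞ for every i, let π₁,…,π_K ≥ 0 with ∑_{i=1}^K π_i = 1, and let Q := ∑_{i=1}^K π_i Q_i. Then KL(Q ‖ p) = ∑_{i=1}^K π_i · KL(Q_i ‖ p) − ∑_{i=1}^K π_i · KL(Q_i ‖ Q); in particular KL(Q ‖ p) ≤ ∑_{i=1}^K π_i · KL(Q_i ‖ p). -/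
open MeasureTheory
open scoped ENNReal

/-- The Kullback–Leibler divergence `KL(μ‖ν) = ∫ log(dμ/dν) dμ` (for `μ ≪ ν`). -/
noncomputable def KLdiv {Z : Type*} [MeasurableSpace Z] (μ ν : Measure Z) : ℝ :=
  ∫ z, Real.log ((μ.rnDeriv ν z).toReal) ∂μ

/-!
Write `ρ` for the mixture. Since `Qᵢ ≪ ρ ≪ p`, the chain rule `dQᵢ/dp = dQᵢ/dρ · dρ/dp` gives
`log dρ/dp = log dQᵢ/dp - log dQᵢ/dρ` `Qᵢ`-a.e.; integrating against `Qᵢ` and summing with weights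
`πᵢ` gives the identity, because `∫ · dρ = ∑ πᵢ ∫ · dQᵢ`. The term `log dQᵢ/dρ` is integrable
because `πᵢ Qᵢ ≤ ρ` bounds `dQᵢ/dρ` by `1/πᵢ`, on which range `x log x + 1 - x` is bounded. The
inequality is then Gibbs' inequality `KL(Qᵢ‖ρ) ≥ 0`.
-/

section

variable {Z : Type*} [MeasurableSpace Z] {μ ν κ : Measure Z}

lemma KLdiv_eq_integral_llr (μ ν : Measure Z) : KLdiv μ ν = ∫ z, llr μ ν z ∂μ := rfl

lemma KLdiv_nonneg [IsFiniteMeasure μ] [IsFiniteMeasure ν] (hμν : μ ≪ ν)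
    (h_univ : μ Set.univ = ν Set.univ) : 0 ≤ KLdiv μ ν := by
  rw [KLdiv_eq_integral_llr, ← InformationTheory.toReal_klDiv_of_measure_eq hμν h_univ]
  exact ENNReal.toReal_nonneg

lemma llr_add_llr_ae_eq [SigmaFinite μ] [SigmaFinite ν] [SigmaFinite κ] (hμν : μ ≪ ν)
    (hνκ : ν ≪ κ) : llr μ ν + llr ν κ =ᵐ[μ] llr μ κ := by
  have hμκ := hμν.trans hνκ
  filter_upwards [hμκ (Measure.rnDeriv_mul_rnDeriv hμν), Measure.rnDeriv_pos hμκ,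
    hμκ (Measure.rnDeriv_lt_top μ κ)] with z h_chain h_pos h_lt
  have h_ne : (μ.rnDeriv ν z).toReal * (ν.rnDeriv κ z).toReal ≠ 0 := by
    rw [← ENNReal.toReal_mul, ← Pi.mul_apply, h_chain]
    exact (ENNReal.toReal_pos h_pos.ne' h_lt.ne).ne'
  simp only [Pi.add_apply, llr, ← Real.log_mul (left_ne_zero_of_mul h_ne)
    (right_ne_zero_of_mul h_ne), ← ENNReal.toReal_mul, ← Pi.mul_apply, h_chain]

lemma rnDeriv_le_inv_of_smul_le [IsFiniteMeasure μ] [SigmaFinite ν] {c : ℝ≥0∞} (hc : c ≠ ∞)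
    (h : c • μ ≤ ν) : ∀ᵐ z ∂ν, μ.rnDeriv ν z ≤ c⁻¹ := by
  filter_upwards [Measure.rnDeriv_le_one_of_le h, Measure.rnDeriv_smul_left_of_ne_top μ ν hc]
    with z h_le h_smul
  rw [h_smul] at h_le
  rwa [ENNReal.le_inv_iff_mul_le, mul_comm]

lemma integrable_llr_of_smul_le [IsFiniteMeasure μ] [IsFiniteMeasure ν] {c : ℝ≥0∞}
    (hc₀ : c ≠ 0) (hc : c ≠ ∞) (h : c • μ ≤ ν) : Integrable (llr μ ν) μ := by
  have hμν : μ ≪ ν :=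
    (Measure.absolutelyContinuous_smul hc₀).trans (Measure.absolutelyContinuous_of_le h)
  obtain ⟨C, hC⟩ := (isCompact_Icc (a := 0) (b := c⁻¹.toReal)).exists_bound_of_continuousOn
    InformationTheory.continuous_klFun.continuousOn
  refine (InformationTheory.integrable_klFun_rnDeriv_iff hμν).mp
    (Integrable.of_bound (InformationTheory.measurable_klFun.comp
      (Measure.measurable_rnDeriv μ ν).ennreal_toReal).aestronglyMeasurable C ?_)
  filter_upwards [rnDeriv_le_inv_of_smul_le hc h] with z hz
  exact hC _ ⟨ENNReal.toReal_nonneg, ENNReal.toReal_mono (ENNReal.inv_ne_top.2 hc₀) hz⟩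

section Mixture

variable {ι : Type*} [Fintype ι] (π : ι → ℝ) (Q : ι → Measure Z)

noncomputable def mixture : Measure Z := ∑ i, ENNReal.ofReal (π i) • Q i

instance isFiniteMeasure_mixture [∀ i, IsFiniteMeasure (Q i)] :
    IsFiniteMeasure (mixture π Q) where
  measure_univ_lt_top := by simp [mixture, ENNReal.mul_lt_top, measure_lt_top]

lemma isProbabilityMeasure_mixture [∀ i, IsProbabilityMeasure (Q i)] (hπ₀ : ∀ i, 0 ≤ π i)
    (hπ₁ : ∑ i, π i = 1) : IsProbabilityMeasure (mixture π Q) := by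
  constructor
  simp only [mixture, Measure.coe_finsetSum, Measure.coe_smul, Finset.sum_apply, Pi.smul_apply,
    measure_univ, smul_eq_mul, mul_one]
  rw [← ENNReal.ofReal_sum_of_nonneg fun i _ ↦ hπ₀ i, hπ₁, ENNReal.ofReal_one]

lemma smul_le_mixture (i : ι) : ENNReal.ofReal (π i) • Q i ≤ mixture π Q :=
  Finset.single_le_sum (f := fun j ↦ ENNReal.ofReal (π j) • Q j)
    (fun _ _ ↦ Measure.zero_le _) (Finset.mem_univ i)

variable {π Q}

lemma absolutelyContinuous_mixture {i : ι} (hπ : 0 < π i) : Q i ≪ mixture π Q :=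
  (Measure.absolutelyContinuous_smul (ENNReal.ofReal_pos.2 hπ).ne').trans
    (Measure.absolutelyContinuous_of_le (smul_le_mixture π Q i))

lemma mixture_absolutelyContinuous {p : Measure Z} (hac : ∀ i, Q i ≪ p) :
    mixture π Q ≪ p := by
  intro s hs
  simp [mixture, hac _ hs]

section Finite

variable [∀ i, IsFiniteMeasure (Q i)] {p : Measure Z} [SigmaFinite p]

lemma integrable_llr_mixture {i : ι} (hπ : 0 < π i) :
    Integrable (llr (Q i) (mixture π Q)) (Q i) :=
  integrable_llr_of_smul_le (ENNReal.ofReal_pos.2 hπ).ne' ENNReal.ofReal_ne_top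
    (smul_le_mixture π Q i)

lemma llr_mixture_ae_eq (hac : ∀ i, Q i ≪ p) {i : ι} (hπ : 0 < π i) :
    llr (mixture π Q) p =ᵐ[Q i] llr (Q i) p - llr (Q i) (mixture π Q) := by
  filter_upwards [llr_add_llr_ae_eq (absolutelyContinuous_mixture hπ)
    (mixture_absolutelyContinuous hac)] with z hz
  rw [Pi.sub_apply, ← hz, Pi.add_apply, add_sub_cancel_left]

lemma integral_llr_mixture_smul (hπ₀ : ∀ i, 0 ≤ π i) (hac : ∀ i, Q i ≪ p)
    (hfin : ∀ i, Integrable (llr (Q i) p) (Q i)) (i : ι) :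
    Integrable (llr (mixture π Q) p) (ENNReal.ofReal (π i) • Q i) ∧
      ∫ z, llr (mixture π Q) p z ∂(ENNReal.ofReal (π i) • Q i)
        = π i * (KLdiv (Q i) p - KLdiv (Q i) (mixture π Q)) := by
  rcases (hπ₀ i).eq_or_lt with hπ | hπ
  · simp [← hπ]
  have h_eq := llr_mixture_ae_eq hac hπ
  have h_int := (hfin i).sub (integrable_llr_mixture hπ)
  refine ⟨(h_int.congr h_eq.symm).smul_measure ENNReal.ofReal_ne_top, ?_⟩
  rw [integral_smul_measure, ENNReal.toReal_ofReal (hπ₀ i), integral_congr_ae h_eq,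
    integral_sub' (hfin i) (integrable_llr_mixture hπ)]
  rfl

theorem KLdiv_mixture_eq (hπ₀ : ∀ i, 0 ≤ π i) (hac : ∀ i, Q i ≪ p)
    (hfin : ∀ i, Integrable (llr (Q i) p) (Q i)) :
    KLdiv (mixture π Q) p
      = ∑ i, π i * KLdiv (Q i) p - ∑ i, π i * KLdiv (Q i) (mixture π Q) := by
  have h_term := integral_llr_mixture_smul hπ₀ hac hfin
  rw [KLdiv_eq_integral_llr, ← Finset.sum_sub_distrib]
  refine (integral_finsetSum_measure fun i _ ↦ (h_term i).1).trans
    (Finset.sum_congr rfl fun i _ ↦ (h_term i).2.trans (mul_sub _ _ _))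

end Finite

theorem KLdiv_mixture_le [∀ i, IsProbabilityMeasure (Q i)] {p : Measure Z} [SigmaFinite p]
    (hπ₀ : ∀ i, 0 ≤ π i) (hπ₁ : ∑ i, π i = 1) (hac : ∀ i, Q i ≪ p)
    (hfin : ∀ i, Integrable (llr (Q i) p) (Q i)) :
    KLdiv (mixture π Q) p ≤ ∑ i, π i * KLdiv (Q i) p := by
  have := isProbabilityMeasure_mixture π Q hπ₀ hπ₁
  have h_gibbs : 0 ≤ ∑ i, π i * KLdiv (Q i) (mixture π Q) := by
    refine Finset.sum_nonneg fun i _ ↦ ?_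
    rcases (hπ₀ i).eq_or_lt with hπ | hπ
    · simp [← hπ]
    · exact mul_nonneg hπ.le (KLdiv_nonneg (absolutelyContinuous_mixture hπ) (by simp))
  linarith [KLdiv_mixture_eq hπ₀ hac hfin]

end Mixture

end

theorem stmt_9 {Z : Type*} [MeasurableSpace Z]
    (p : Measure Z) [IsProbabilityMeasure p]
    (K : ℕ) (Q : Fin K → Measure Z) (hQprob : ∀ i, IsProbabilityMeasure (Q i))
    (π : Fin K → ℝ) (hπ0 : ∀ i, 0 ≤ π i) (hπsum : ∑ i, π i = 1)
    (hac : ∀ i, Q i ≪ p)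
    -- KL(Q_i ‖ p) < ∞ : the log-density is Q_i-integrable
    (hfin : ∀ i, Integrable (fun z => Real.log (((Q i).rnDeriv p z).toReal)) (Q i)) :
    KLdiv (∑ i, ENNReal.ofReal (π i) • Q i) p
        = (∑ i, π i * KLdiv (Q i) p)
          - ∑ i, π i * KLdiv (Q i) (∑ j, ENNReal.ofReal (π j) • Q j)
      ∧ KLdiv (∑ i, ENNReal.ofReal (π i) • Q i) p ≤ ∑ i, π i * KLdiv (Q i) p :=
  ⟨KLdiv_mixture_eq hπ0 hac hfin, KLdiv_mixture_le hπ0 hπsum hac hfin⟩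
end

section
/- Proposition 2 (forgetting bound for GANs trained with generative replay): Let t ≥ 1, and for each task k ∈ {1,…,t} let P_k be its target distribution and let ℙ^{k−1}_k, ℙ^k_k, …, ℙ^t_k be probability measures on X (ℙ^j_k being the part of the GAN generator distribution corresponding to task k after training on j tasks, with ℙ^{k−1}_k the training distribution P̃_k of task k). Let H be a set of measurable maps X → Y, and let h ∈ H and f_k ∈ H for each k (the true labeling function of task k). Then ∑_{k=1}^t R_{P_k}(h, f_k) ≤ ∑_{k=1}^t [ R_{ℙ^t_k}(h, f_k) + ∑_{j=k}^t disc_H(ℙ^{j−1}_k, ℙ^j_k) + disc_H(ℙ^{k−1}_k, P_k) ]. -/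
open MeasureTheory
open scoped ENNReal

/-- The risk `R_μ(h,h') = ∫ d(h x, h' x) dμ(x)`. -/
noncomputable def risk {X Y : Type*} [MeasurableSpace X] [MetricSpace Y]
    (μ : Measure X) (h h' : X → Y) : ℝ :=
  ∫ x, dist (h x) (h' x) ∂μ

/-- The discrepancy distance
`disc_H(μ,ν) = sup_{(h,h') ∈ H × H} |R_μ(h,h') − R_ν(h,h')|`. -/
noncomputable def disc {X Y : Type*} [MeasurableSpace X] [MetricSpace Y]
    (H : Set (X → Y)) (μ ν : Measure X) : ℝ :=
  sSup {r : ℝ | ∃ h ∈ H, ∃ h' ∈ H, r = |risk μ h h' - risk ν h h'|}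

/-! Following the risk along the chain `ℙ^{k-1}_k, …, ℙ^t_k` and then to `P_k`, each step changes
it by at most the discrepancy between consecutive measures; boundedness of `d` is what keeps the
discrepancy an honest supremum rather than the junk value of `sSup` of an unbounded set. -/

section Discrepancy

variable {X Y : Type*} [MeasurableSpace X] [MetricSpace Y]

theorem abs_risk_le {M : ℝ} (hd : ∀ y y' : Y, dist y y' ≤ M)
    (μ : Measure X) [IsFiniteMeasure μ] (g g' : X → Y) :
    |risk μ g g'| ≤ M * μ.real Set.univ := by
  have := norm_integral_le_of_norm_le_const (μ := μ) (f := fun x => dist (g x) (g' x))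
    (Filter.Eventually.of_forall fun x => by
      simpa only [Real.norm_eq_abs, abs_dist] using hd (g x) (g' x))
  simpa only [risk, Real.norm_eq_abs] using this

theorem bddAbove_abs_risk_sub_risk {M : ℝ} (hd : ∀ y y' : Y, dist y y' ≤ M)
    (H : Set (X → Y)) (μ ν : Measure X) [IsFiniteMeasure μ] [IsFiniteMeasure ν] :
    BddAbove {r : ℝ | ∃ h ∈ H, ∃ h' ∈ H, r = |risk μ h h' - risk ν h h'|} := by
  refine ⟨M * μ.real Set.univ + M * ν.real Set.univ, ?_⟩
  rintro r ⟨g, -, g', -, rfl⟩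
  exact (abs_sub _ _).trans (add_le_add (abs_risk_le hd μ g g') (abs_risk_le hd ν g g'))

theorem abs_risk_sub_risk_le_disc {M : ℝ} (hd : ∀ y y' : Y, dist y y' ≤ M)
    {H : Set (X → Y)} {g g' : X → Y} (hg : g ∈ H) (hg' : g' ∈ H)
    (μ ν : Measure X) [IsFiniteMeasure μ] [IsFiniteMeasure ν] :
    |risk μ g g' - risk ν g g'| ≤ disc H μ ν :=
  le_csSup (bddAbove_abs_risk_sub_risk hd H μ ν) ⟨g, hg, g', hg', rfl⟩

theorem disc_comm (H : Set (X → Y)) (μ ν : Measure X) : disc H μ ν = disc H ν μ := by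
  simp only [disc, abs_sub_comm (risk μ _ _)]

theorem risk_le_risk_add_disc {M : ℝ} (hd : ∀ y y' : Y, dist y y' ≤ M)
    {H : Set (X → Y)} {g g' : X → Y} (hg : g ∈ H) (hg' : g' ∈ H)
    (μ ν : Measure X) [IsFiniteMeasure μ] [IsFiniteMeasure ν] :
    risk μ g g' ≤ risk ν g g' + disc H μ ν := by
  linarith [le_of_abs_le (abs_risk_sub_risk_le_disc hd hg hg' μ ν)]

end Discrepancy

theorem le_add_sum_Icc_of_le_add {a d : ℕ → ℝ} {k t : ℕ} (hkt : k ≤ t + 1)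
    (h : ∀ j ∈ Finset.Icc k t, a (j - 1) ≤ a j + d j) :
    a (k - 1) ≤ a t + ∑ j ∈ Finset.Icc k t, d j := by
  induction t with
  | zero =>
    interval_cases k
    · simpa using h 0 (by simp)
    · simp
  | succ t ih =>
    rcases Nat.lt_or_ge (t + 1) k with htk | htk
    · obtain rfl : k = t + 2 := by omega
      simp
    · rw [Finset.sum_Icc_succ_top htk]
      have hstep := h (t + 1) (Finset.mem_Icc.mpr ⟨htk, le_rfl⟩)
      have hchain := ih (by omega) fun j hj => h j (Finset.Icc_subset_Icc_right t.le_succ hj)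
      simp only [add_tsub_cancel_right] at hstep
      linarith

theorem stmt_14_general {X Y : Type*} [MeasurableSpace X] [MetricSpace Y]
    (M : ℝ) (hd : ∀ y y' : Y, dist y y' ≤ M)
    (t : ℕ)
    -- target distribution of each task
    (P : ℕ → Measure X) (hP : ∀ k ∈ Finset.Icc 1 t, IsProbabilityMeasure (P k))
    -- ℙ^j_k : the part of the generator distribution for task k after training on
    -- j tasks, for j ∈ {k−1, …, t}, with ℙ^{k−1}_k the training distribution of task k
    (PP : ℕ → ℕ → Measure X)
    (hPP : ∀ k ∈ Finset.Icc 1 t, ∀ j ∈ Finset.Icc (k - 1) t, IsProbabilityMeasure (PP k j))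
    (H : Set (X → Y))
    (h : X → Y) (hhH : h ∈ H)
    (f : ℕ → X → Y) (hfH : ∀ k ∈ Finset.Icc 1 t, f k ∈ H) :
    ∑ k ∈ Finset.Icc 1 t, risk (P k) h (f k)
      ≤ ∑ k ∈ Finset.Icc 1 t,
          (risk (PP k t) h (f k)
            + ∑ j ∈ Finset.Icc k t, disc H (PP k (j - 1)) (PP k j)
            + disc H (PP k (k - 1)) (P k)) := by
  refine Finset.sum_le_sum fun k hk => ?_
  have hkt : k ≤ t := (Finset.mem_Icc.mp hk).2
  have := hP k hk
  have hPPk (j : ℕ) (hj : k - 1 ≤ j ∧ j ≤ t) := hPP k hk j (Finset.mem_Icc.mpr hj)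
  have := hPPk (k - 1) (by omega)
  have htrain : risk (P k) h (f k) ≤ risk (PP k (k - 1)) h (f k) + disc H (PP k (k - 1)) (P k) :=
    disc_comm H (PP k (k - 1)) (P k) ▸ risk_le_risk_add_disc hd hhH (hfH k hk) _ _
  have hreplay : risk (PP k (k - 1)) h (f k)
      ≤ risk (PP k t) h (f k) + ∑ j ∈ Finset.Icc k t, disc H (PP k (j - 1)) (PP k j) := by
    refine le_add_sum_Icc_of_le_add (a := fun j => risk (PP k j) h (f k))
      (d := fun j => disc H (PP k (j - 1)) (PP k j)) (Nat.le_succ_of_le hkt) fun j hj => ?_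
    obtain ⟨hkj, hjt⟩ := Finset.mem_Icc.mp hj
    have := hPPk (j - 1) (by omega)
    have := hPPk j (by omega)
    exact risk_le_risk_add_disc hd hhH (hfH k hk) _ _
  linarith

theorem stmt_14 {X Y : Type*} [MeasurableSpace X] [MetricSpace Y] [MeasurableSpace Y]
    (M : ℝ) (hM : 0 ≤ M) (hd : ∀ y y' : Y, dist y y' ≤ M)
    (t : ℕ) (ht : 1 ≤ t)
    -- target distribution of each task
    (P : ℕ → Measure X) (hP : ∀ k ∈ Finset.Icc 1 t, IsProbabilityMeasure (P k))
    -- ℙ^j_k : the part of the generator distribution for task k after training on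
    -- j tasks, for j ∈ {k−1, …, t}, with ℙ^{k−1}_k the training distribution of task k
    (PP : ℕ → ℕ → Measure X)
    (hPP : ∀ k ∈ Finset.Icc 1 t, ∀ j ∈ Finset.Icc (k - 1) t, IsProbabilityMeasure (PP k j))
    (H : Set (X → Y)) (hH : ∀ g ∈ H, Measurable g)
    (h : X → Y) (hhH : h ∈ H)
    (f : ℕ → X → Y) (hfH : ∀ k ∈ Finset.Icc 1 t, f k ∈ H) :
    ∑ k ∈ Finset.Icc 1 t, risk (P k) h (f k)
      ≤ ∑ k ∈ Finset.Icc 1 t,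
          (risk (PP k t) h (f k)
            + ∑ j ∈ Finset.Icc k t, disc H (PP k (j - 1)) (PP k j)
            + disc H (PP k (k - 1)) (P k)) :=
  stmt_14_general M hd t P hP PP hPP H h hhH f hfH
end
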